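/- Let P be a non-obtuse hyperbolic polyhedron (all dihedral angles ≤ π/2), and let F₁, F₂ be faces with defining planes Π₁, Π₂. Then the closures of F₁ and F₂ intersect in the closure of H³ if and only if the closures of Π₁ and Π₂ intersect. -/

import Mathlib

/-!
Work in the Klein model. If the closures of the faces `F₁`, `F₂` were disjoint, the continuous
function `sech² d(x, z)` would attain a positive maximum on `F̄₁ × F̄₂` at a pair `(a, b)` of
points of the open ball. Non-obtuseness keeps the foot of the perpendicular from `b` to `Π₁`
inside `F₁` (walking inside `Π₁` from a point of `F₁` towards the foot, the first face met makes
a non-obtuse angle with `F₁` and so cannot separate the foot from `b`); hence `a` is that foot,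
and symmetrically `b` is the foot of the perpendicular from `a` to `Π₂`. The geodesic `ab` is then
a common perpendicular of `Π₁` and `Π₂`, which two planes whose closures meet cannot have.
-/

open Set
open scoped RealInnerProductSpace

namespace KleinModel

lemma closure_setOf_norm_lt_one_and_subset {E : Type*} [SeminormedAddCommGroup E]
    {q : E → Prop} (hq : IsClosed {x : E | q x}) :
    closure {x | ‖x‖ < 1 ∧ q x} ⊆ {x | ‖x‖ ≤ 1 ∧ q x} :=
  closure_minimal (fun _ hx => ⟨hx.1.le, hx.2⟩)
    ((isClosed_le continuous_norm continuous_const).inter hq)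

variable {F : Type*} [NormedAddCommGroup F] [InnerProductSpace ℝ F]

lemma real_inner_lt_one_of_norm_lt_one {x z : F} (hx : ‖x‖ < 1) (hz : ‖z‖ ≤ 1) :
    ⟪x, z⟫ < 1 :=
  calc ⟪x, z⟫ ≤ ‖x‖ * ‖z‖ := real_inner_le_norm x z
    _ ≤ ‖x‖ := mul_le_of_le_one_right (norm_nonneg x) hz
    _ < 1 := hx

lemma real_inner_lt_one_of_ne {x z : F} (hx : ‖x‖ ≤ 1) (hz : ‖z‖ ≤ 1) (hne : x ≠ z) :
    ⟪x, z⟫ < 1 := by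
  by_contra! h
  have hsq : ‖x - z‖ ^ 2 ≤ 0 := by
    rw [norm_sub_sq_real]
    nlinarith [norm_nonneg x, norm_nonneg z]
  exact hne (sub_eq_zero.mp (norm_eq_zero.mp (pow_eq_zero_iff two_ne_zero |>.mp
    (le_antisymm hsq (sq_nonneg _)))))

lemma eq_of_one_sub_inner_sq_le {a p : F} (ha : ‖a‖ < 1)
    (h : (1 - ⟪a, p⟫) ^ 2 ≤ (1 - ‖a‖ ^ 2) * (1 - ‖p‖ ^ 2)) : a = p := by
  have hid : (1 - ⟪a, p⟫) ^ 2 - (1 - ‖a‖ ^ 2) * (1 - ‖p‖ ^ 2)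
      = (1 - ‖a‖ ^ 2) * ‖p - a‖ ^ 2 + ⟪a, p - a⟫ ^ 2 := by
    rw [norm_sub_sq_real, inner_sub_right, real_inner_self_eq_norm_sq, real_inner_comm p a]
    ring
  have ha2 : 0 < 1 - ‖a‖ ^ 2 := by nlinarith [norm_nonneg a]
  have hsq : ‖p - a‖ ^ 2 ≤ 0 := by
    nlinarith [sq_nonneg ⟪a, p - a⟫, sq_nonneg ‖p - a‖, mul_nonneg ha2.le (sq_nonneg ‖p - a‖)]
  exact (sub_eq_zero.mp (norm_eq_zero.mp (pow_eq_zero_iff two_ne_zero |>.mp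
    (le_antisymm hsq (sq_nonneg _))))).symm

/-- In the Klein model this is `1 / cosh² d(x, y)` for the hyperbolic distance `d`; unlike `cosh d`
it is continuous on pairs of points of the closed ball with `⟪x, y⟫ ≠ 1`. -/
noncomputable def sechSqDist (x y : F) : ℝ :=
  (1 - ‖x‖ ^ 2) * (1 - ‖y‖ ^ 2) / (1 - ⟪x, y⟫) ^ 2

lemma sechSqDist_comm (x y : F) : sechSqDist x y = sechSqDist y x := by
  rw [sechSqDist, sechSqDist, real_inner_comm, mul_comm]

lemma sechSqDist_pos {x y : F} (hx : ‖x‖ < 1) (hy : ‖y‖ < 1) : 0 < sechSqDist x y := by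
  have hxy := real_inner_lt_one_of_norm_lt_one hx hy.le
  have : 0 < 1 - ‖x‖ ^ 2 := by nlinarith [norm_nonneg x]
  have : 0 < 1 - ‖y‖ ^ 2 := by nlinarith [norm_nonneg y]
  unfold sechSqDist
  have : 0 < 1 - ⟪x, y⟫ := by linarith
  positivity

lemma norm_lt_one_of_sechSqDist_pos {x y : F} (hx : ‖x‖ ≤ 1) (h : 0 < sechSqDist x y) :
    ‖x‖ < 1 := by
  refine hx.lt_of_ne fun hx1 => h.ne' ?_
  simp [sechSqDist, hx1]

lemma exists_forall_sechSqDist_le {K L : Set F} (hK : IsCompact K) (hL : IsCompact L)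
    (hKne : K.Nonempty) (hLne : L.Nonempty) (hKL : ∀ x ∈ K, ∀ y ∈ L, ⟪x, y⟫ ≠ 1) :
    ∃ a ∈ K, ∃ b ∈ L, ∀ x ∈ K, ∀ y ∈ L, sechSqDist x y ≤ sechSqDist a b := by
  have hcont : ContinuousOn (fun q : F × F => sechSqDist q.1 q.2) (K ×ˢ L) := by
    refine ContinuousOn.div (by fun_prop) (by fun_prop) fun q hq => ?_
    exact pow_ne_zero 2 (sub_ne_zero.mpr (hKL q.1 hq.1 q.2 hq.2).symm)
  obtain ⟨⟨a, b⟩, ⟨ha, hb⟩, hmax⟩ := (hK.prod hL).exists_isMaxOn (hKne.prod hLne) hcont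
  exact ⟨a, ha, b, hb, fun x hx y hy => hmax (mk_mem_prod hx hy)⟩

/-- Read projectively, `b` lies on the line through `p` and the pole `[n : c]` of the plane
`⟪n, x⟫ = c`; in the Klein model these lines are the geodesics perpendicular to the plane. -/
def OnPerpendicular (n : F) (c : ℝ) (p b : F) : Prop :=
  ∃ τ κ : ℝ, 0 < τ ∧ τ + κ * c = 1 ∧ b = τ • p + κ • n

lemma one_sub_inner_eq_mul_of_eq_add_smul {n p b x : F} {c τ κ : ℝ} (hτκ : τ + κ * c = 1)
    (hb : b = τ • p + κ • n) (hx : ⟪n, x⟫ = c) : 1 - ⟪x, b⟫ = τ * (1 - ⟪x, p⟫) := by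
  rw [hb, inner_add_right, real_inner_smul_right, real_inner_smul_right, real_inner_comm n x, hx]
  linear_combination -hτκ

lemma eq_of_sechSqDist_le_of_onPerpendicular {n a p b : F} {c : ℝ} (ha : ‖a‖ < 1)
    (hp : ‖p‖ < 1) (hb : ‖b‖ < 1) (hna : ⟪n, a⟫ = c) (hnp : ⟪n, p⟫ = c)
    (hperp : OnPerpendicular n c p b) (hle : sechSqDist p b ≤ sechSqDist a b) : a = p := by
  obtain ⟨τ, κ, hτ, hτκ, hbp⟩ := hperp
  have hpb := one_sub_inner_eq_mul_of_eq_add_smul (x := p) hτκ hbp hnp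
  have hab := one_sub_inner_eq_mul_of_eq_add_smul (x := a) hτκ hbp hna
  rw [real_inner_self_eq_norm_sq] at hpb
  have hπ : 0 < 1 - ‖p‖ ^ 2 := by nlinarith [norm_nonneg p]
  have hβ : 0 < 1 - ‖b‖ ^ 2 := by nlinarith [norm_nonneg b]
  have hσ : 0 < 1 - ⟪a, p⟫ := by linarith [real_inner_lt_one_of_norm_lt_one ha hp.le]
  rw [sechSqDist, sechSqDist, hpb, hab, div_le_div_iff₀ (by positivity) (by positivity)] at hle
  refine eq_of_one_sub_inner_sq_le ha ?_
  have hpos : 0 < (1 - ‖b‖ ^ 2) * τ ^ 2 * (1 - ‖p‖ ^ 2) := by positivity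
  nlinarith

lemma eq_of_onPerpendicular_of_onPerpendicular {n₁ n₂ a b y : F} {c₁ c₂ : ℝ}
    (hn₁ : ‖n₁‖ = 1) (hc₁ : |c₁| < 1) (ha : ‖a‖ < 1) (hy : ‖y‖ ≤ 1)
    (ha₁ : ⟪n₁, a⟫ = c₁) (hb₂ : ⟪n₂, b⟫ = c₂) (hy₁ : ⟪n₁, y⟫ = c₁) (hy₂ : ⟪n₂, y⟫ = c₂)
    (hperp₁ : OnPerpendicular n₁ c₁ a b) (hperp₂ : OnPerpendicular n₂ c₂ b a) : a = b := by
  obtain ⟨τ, κ, -, hτκ, hb⟩ := hperp₁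
  obtain ⟨τ', κ', -, hτκ', ha'⟩ := hperp₂
  have hya : 0 < 1 - ⟪y, a⟫ := by
    linarith [real_inner_lt_one_of_norm_lt_one ha hy, real_inner_comm a y]
  have hyb := one_sub_inner_eq_mul_of_eq_add_smul hτκ hb hy₁
  have hya' := one_sub_inner_eq_mul_of_eq_add_smul hτκ' ha' hy₂
  -- Pairing both relations with `y` gives `τ τ' = 1`; expanding `‖b‖²` then forces `κ = 0`.
  have hττ' : τ * τ' = 1 := by
    have : (1 - ⟪y, a⟫) * (τ * τ' - 1) = 0 := by linear_combination -hya' - τ' * hyb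
    linarith [(mul_eq_zero.mp this).resolve_left hya.ne']
  have hab₂ : ⟪a, b⟫ = τ' * ‖b‖ ^ 2 + κ' * c₂ := by
    rw [ha', inner_add_left, real_inner_smul_left, real_inner_smul_left,
      real_inner_self_eq_norm_sq, hb₂]
  have hab₁ : ⟪a, b⟫ = τ * ‖a‖ ^ 2 + κ * c₁ := by
    rw [hb, inner_add_right, real_inner_smul_right, real_inner_smul_right,
      real_inner_self_eq_norm_sq, real_inner_comm, ha₁]
  have hbb : ‖b‖ ^ 2 = τ ^ 2 * ‖a‖ ^ 2 + 2 * τ * κ * c₁ + κ ^ 2 := by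
    rw [hb, norm_add_sq_real, norm_smul, norm_smul, real_inner_smul_left, real_inner_smul_right,
      hn₁, real_inner_comm, ha₁, Real.norm_eq_abs, Real.norm_eq_abs, mul_pow, mul_pow, sq_abs,
      sq_abs]
    ring
  have hκ : κ = 0 := by
    have hc : 0 < 1 - c₁ ^ 2 := by nlinarith [abs_lt.mp hc₁]
    have : κ ^ 2 * (1 - c₁ ^ 2) = 0 := by
      linear_combination τ * (hab₁ - hab₂) - (1 + κ * c₁) * hτκ - (‖b‖ ^ 2 - 1) * hττ' - hbb
        - τ * hτκ'
    simpa [hc.ne'] using this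
  have hτ : τ = 1 := by simpa [hκ] using hτκ
  rw [hb, hκ, hτ, zero_smul, add_zero, one_smul]

lemma exists_first_crossing {ι : Type*} [Fintype ι] (u v : ι → ℝ) (hu : ∀ g, u g ≤ 0)
    (hv : ∃ g, 0 < u g + v g) :
    ∃ s ∈ Icc (0 : ℝ) 1, ∃ g, 0 < u g + v g ∧ u g + s * v g = 0 ∧ ∀ h, u h + s * v h ≤ 0 := by
  classical
  obtain ⟨g, hg, hmin⟩ := (Finset.univ.filter fun g => 0 < u g + v g).exists_min_image
    (fun g => -u g / v g) (by simpa [Finset.filter_nonempty_iff] using hv)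
  simp only [Finset.mem_filter, Finset.mem_univ, true_and] at hg hmin
  have hvg : 0 < v g := by linarith [hu g]
  refine ⟨-u g / v g, ⟨div_nonneg (by linarith [hu g]) hvg.le, ?_⟩, g, hg, ?_, fun h => ?_⟩
  · rw [div_le_one hvg]; linarith
  · field_simp; ring
  · by_cases hh : 0 < u h + v h
    · have hvh : 0 < v h := by linarith [hu h]
      have := (le_div_iff₀ hvh).mp (hmin h hh)
      linarith
    · have hs : -u g / v g ≤ 1 := by rw [div_le_one hvg]; linarith
      have hs0 : 0 ≤ -u g / v g := div_nonneg (by linarith [hu g]) hvg.le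
      nlinarith [hu h]

section Polyhedron

variable {ι : Type*} (n : ι → F) (c : ι → ℝ)

def polyhedron : Set F := {x | ‖x‖ < 1 ∧ ∀ f, ⟪n f, x⟫ ≤ c f}

def face (f : ι) : Set F := {x ∈ polyhedron n c | ⟪n f, x⟫ = c f}

variable {n c}

lemma exists_face_inter_nonempty_of_notMem_polyhedron [Fintype ι] {f : ι} {x₀ p : F}
    (hx₀ : x₀ ∈ face n c f) (hp : ‖p‖ < 1) (hpf : ⟪n f, p⟫ = c f) (hpP : p ∉ polyhedron n c) :
    ∃ g, c g < ⟪n g, p⟫ ∧ (face n c f ∩ face n c g).Nonempty := by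
  obtain ⟨⟨hx₀1, hx₀P⟩, hx₀f⟩ := hx₀
  have hpP' : ∃ g, c g < ⟪n g, p⟫ := by simpa [polyhedron, hp] using hpP
  obtain ⟨s, hs, g, hg, hgs, hs_le⟩ := exists_first_crossing (fun h => ⟪n h, x₀⟫ - c h)
    (fun h => ⟪n h, p - x₀⟫) (fun h => by linarith [hx₀P h])
    (by simpa [inner_sub_right] using hpP')
  set z := x₀ + s • (p - x₀)
  have hz : ∀ h, ⟪n h, z⟫ - c h = (⟪n h, x₀⟫ - c h) + s * ⟪n h, p - x₀⟫ := fun h => by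
    rw [inner_add_right, real_inner_smul_right]; ring
  have hz1 : ‖z‖ < 1 := by
    simpa using
      (convex_ball (0 : F) 1).add_smul_sub_mem (by simpa using hx₀1) (by simpa using hp) hs
  have hzP : z ∈ polyhedron n c := ⟨hz1, fun h => by linarith [hz h, hs_le h]⟩
  refine ⟨g, by simpa [inner_sub_right] using hg, z, ⟨hzP, ?_⟩, ⟨hzP, ?_⟩⟩
  · have hzf := hz f
    rw [inner_sub_right, hpf, hx₀f, sub_self, mul_zero] at hzf
    linarith
  · linarith [hz g]

lemma exists_mem_face_onPerpendicular [Fintype ι] {f : ι} {b : F} (hn : ‖n f‖ = 1)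
    (hc : |c f| < 1) (hf : (face n c f).Nonempty)
    (hnob : ∀ g, f ≠ g → (face n c f ∩ face n c g).Nonempty → ⟪n f, n g⟫ ≤ c f * c g)
    (hb : b ∈ polyhedron n c) : ∃ p ∈ face n c f, OnPerpendicular (n f) (c f) p b := by
  obtain ⟨hb1, hbP⟩ := hb
  have hc2 : 0 < 1 - c f ^ 2 := by nlinarith [abs_lt.mp hc]
  set κ := (⟪n f, b⟫ - c f) / (1 - c f ^ 2)
  set τ := 1 - κ * c f with hτ_def
  have hκ : κ * (1 - c f ^ 2) = ⟪n f, b⟫ - c f := div_mul_cancel₀ _ hc2.ne'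
  have hκ0 : κ ≤ 0 := div_nonpos_of_nonpos_of_nonneg (by linarith [hbP f]) hc2.le
  have hτ : 0 < τ := by
    have hcb : c f * ⟪n f, b⟫ < 1 :=
      calc c f * ⟪n f, b⟫ ≤ |c f| * |⟪n f, b⟫| := by rw [← abs_mul]; exact le_abs_self _
        _ ≤ |c f| * 1 := by
          gcongr
          exact (abs_real_inner_le_norm _ _).trans (by rw [hn, one_mul]; exact hb1.le)
        _ < 1 := by linarith
    have : τ * (1 - c f ^ 2) = 1 - c f * ⟪n f, b⟫ := by
      rw [hτ_def]; linear_combination (-c f) * hκ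
    exact pos_of_mul_pos_left (this ▸ sub_pos.mpr hcb) hc2.le
  obtain ⟨p, hbp⟩ : ∃ p : F, b = τ • p + κ • n f :=
    ⟨τ⁻¹ • (b - κ • n f), by rw [smul_inv_smul₀ hτ.ne', sub_add_cancel]⟩
  have hnp : ⟪n f, p⟫ = c f := by
    have : τ * ⟪n f, p⟫ = τ * c f := by
      have := congrArg (⟪n f, ·⟫) hbp
      simp only [inner_add_right, real_inner_smul_right, real_inner_self_eq_norm_sq, hn] at this
      linear_combination -this - hκ
    exact mul_left_cancel₀ hτ.ne' this
  have hp1 : ‖p‖ < 1 := by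
    have : τ ^ 2 * (1 - ‖p‖ ^ 2) = 1 - ‖b‖ ^ 2 + κ ^ 2 * (1 - c f ^ 2) := by
      rw [hbp, norm_add_sq_real, norm_smul, norm_smul, real_inner_smul_left,
        real_inner_smul_right, hn, real_inner_comm, hnp, Real.norm_eq_abs, Real.norm_eq_abs,
        mul_pow, mul_pow, sq_abs, sq_abs]
      linear_combination (-(τ + κ * c f) - 1) * hτ_def
    have hb2 : 0 < 1 - ‖b‖ ^ 2 := by nlinarith [norm_nonneg b]
    have : 0 < 1 - ‖p‖ ^ 2 :=
      pos_of_mul_pos_right (this ▸ by positivity) (sq_nonneg τ)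
    nlinarith [norm_nonneg p]
  refine ⟨p, ⟨⟨hp1, ?_⟩, hnp⟩, τ, κ, hτ, by rw [hτ_def]; ring, hbp⟩
  by_contra hpP
  obtain ⟨g, hgp, hfg⟩ := exists_face_inter_nonempty_of_notMem_polyhedron hf.some_mem hp1 hnp
    fun h => hpP h.2
  have hne : f ≠ g := by rintro rfl; linarith
  have hng : ⟪n g, b⟫ = τ * ⟪n g, p⟫ + κ * ⟪n f, n g⟫ := by
    rw [hbp, inner_add_right, real_inner_smul_right, real_inner_smul_right,
      real_inner_comm (n f) (n g)]
  have := hnob g hne hfg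
  -- `τ ⟪n g, p⟫ = ⟪n g, b⟫ - κ ⟪n f, n g⟫ ≤ c g - κ c f c g = τ c g`, as `κ ≤ 0`
  nlinarith [hbP g, mul_le_mul_of_nonpos_left this hκ0]

lemma onPerpendicular_of_forall_sechSqDist_le [Fintype ι] {f : ι} {a b : F} (hn : ‖n f‖ = 1)
    (hc : |c f| < 1)
    (hnob : ∀ g, f ≠ g → (face n c f ∩ face n c g).Nonempty → ⟪n f, n g⟫ ≤ c f * c g)
    (ha : a ∈ face n c f) (hb : b ∈ polyhedron n c)
    (hmax : ∀ x ∈ face n c f, sechSqDist x b ≤ sechSqDist a b) :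
    OnPerpendicular (n f) (c f) a b := by
  obtain ⟨p, hp, hperp⟩ := exists_mem_face_onPerpendicular hn hc ⟨a, ha⟩ hnob hb
  obtain rfl : a = p := eq_of_sechSqDist_le_of_onPerpendicular ha.1.1 hp.1.1 hb.1 ha.2 hp.2
    hperp (hmax p hp)
  exact hperp

lemma closure_face_subset (f : ι) :
    closure (face n c f) ⊆ {x | ‖x‖ ≤ 1 ∧ (∀ g, ⟪n g, x⟫ ≤ c g) ∧ ⟪n f, x⟫ = c f} := by
  have hface : face n c f = {x | ‖x‖ < 1 ∧ (∀ g, ⟪n g, x⟫ ≤ c g) ∧ ⟪n f, x⟫ = c f} := by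
    ext; simp [face, polyhedron, and_assoc]
  rw [hface]
  refine closure_setOf_norm_lt_one_and_subset ?_
  simp only [ofPred_and, ofPred_forall]
  exact (isClosed_iInter fun g => isClosed_le (by fun_prop) (by fun_prop)).inter
    (isClosed_eq (by fun_prop) (by fun_prop))

lemma mem_face_of_mem_closure {f : ι} {x : F} (hx : x ∈ closure (face n c f)) (h : ‖x‖ < 1) :
    x ∈ face n c f :=
  have hx' := closure_face_subset f hx
  ⟨⟨h, hx'.2.1⟩, hx'.2.2⟩

lemma isCompact_closure_face [ProperSpace F] (f : ι) : IsCompact (closure (face n c f)) :=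
  (isCompact_closedBall (0 : F) 1).of_isClosed_subset isClosed_closure fun _ hx => by
    simpa using (closure_face_subset f hx).1

theorem closure_face_inter_nonempty [Fintype ι] [ProperSpace F] (hn : ∀ f, ‖n f‖ = 1)
    (hc : ∀ f, |c f| < 1) (hface : ∀ f, (face n c f).Nonempty)
    (hnob : ∀ f g, f ≠ g → (face n c f ∩ face n c g).Nonempty → ⟪n f, n g⟫ ≤ c f * c g)
    {f₁ f₂ : ι} {y : F} (hy : ‖y‖ ≤ 1) (hy₁ : ⟪n f₁, y⟫ = c f₁) (hy₂ : ⟪n f₂, y⟫ = c f₂) :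
    (closure (face n c f₁) ∩ closure (face n c f₂)).Nonempty := by
  by_contra hdisj
  have hne : ∀ x ∈ closure (face n c f₁), ∀ z ∈ closure (face n c f₂), x ≠ z :=
    fun x hx z hz hxz => hdisj ⟨x, hx, hxz ▸ hz⟩
  obtain ⟨a, haK, b, hbK, hmax⟩ := exists_forall_sechSqDist_le (isCompact_closure_face f₁)
    (isCompact_closure_face f₂) (hface f₁).closure (hface f₂).closure
    fun x hx z hz => (real_inner_lt_one_of_ne (closure_face_subset f₁ hx).1
      (closure_face_subset f₂ hz).1 (hne x hx z hz)).ne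
  obtain ⟨x₁, hx₁⟩ := hface f₁
  obtain ⟨x₂, hx₂⟩ := hface f₂
  have hpos : 0 < sechSqDist a b := (sechSqDist_pos hx₁.1.1 hx₂.1.1).trans_le
    (hmax x₁ (subset_closure hx₁) x₂ (subset_closure hx₂))
  have ha : a ∈ face n c f₁ := mem_face_of_mem_closure haK
    (norm_lt_one_of_sechSqDist_pos (closure_face_subset f₁ haK).1 hpos)
  have hb : b ∈ face n c f₂ := mem_face_of_mem_closure hbK
    (norm_lt_one_of_sechSqDist_pos (closure_face_subset f₂ hbK).1 (sechSqDist_comm a b ▸ hpos))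
  have hab : OnPerpendicular (n f₁) (c f₁) a b :=
    onPerpendicular_of_forall_sechSqDist_le (hn f₁) (hc f₁) (hnob f₁) ha hb.1
      fun x hx => hmax x (subset_closure hx) b hbK
  have hba : OnPerpendicular (n f₂) (c f₂) b a :=
    onPerpendicular_of_forall_sechSqDist_le (hn f₂) (hc f₂) (hnob f₂) hb ha.1
      fun z hz => by simpa only [sechSqDist_comm _ a] using hmax a haK z (subset_closure hz)
  exact hne a haK b hbK <|
    eq_of_onPerpendicular_of_onPerpendicular (hn f₁) (hc f₁) ha.1.1 hy ha.2 hb.2 hy₁ hy₂ hab hba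

end Polyhedron

end KleinModel

open KleinModel

theorem stmt14_general {ι : Type*} [Fintype ι]
    (n : ι → EuclideanSpace ℝ (Fin 3)) (c : ι → ℝ)
    (hn : ∀ f, ‖n f‖ = 1) (hc : ∀ f, |c f| < 1)
    (P : Set (EuclideanSpace ℝ (Fin 3)))
    (hP : P = {x | ‖x‖ < 1 ∧ ∀ f, (inner ℝ (n f) x : ℝ) ≤ c f})
    (Face : ι → Set (EuclideanSpace ℝ (Fin 3)))
    (hFace : ∀ f, Face f = {x ∈ P | (inner ℝ (n f) x : ℝ) = c f})
    (hface_ne : ∀ f, (Face f).Nonempty)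
    (Plane : ι → Set (EuclideanSpace ℝ (Fin 3)))
    (hPlane : ∀ f, Plane f = {x | ‖x‖ < 1 ∧ (inner ℝ (n f) x : ℝ) = c f})
    (hnonobtuse : ∀ f g, f ≠ g → (Face f ∩ Face g).Nonempty →
      (inner ℝ (n f) (n g) : ℝ) ≤ c f * c g)
    (f₁ f₂ : ι) :
    (closure (Face f₁) ∩ closure (Face f₂)).Nonempty ↔
      (closure (Plane f₁) ∩ closure (Plane f₂)).Nonempty := by
  subst hP
  obtain rfl : Face = face n c := funext hFace
  obtain rfl : Plane = fun f => {x | ‖x‖ < 1 ∧ ⟪n f, x⟫ = c f} := funext hPlane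
  constructor
  · rintro ⟨x, hx₁, hx₂⟩
    have hsub : ∀ f, face n c f ⊆ {x | ‖x‖ < 1 ∧ ⟪n f, x⟫ = c f} := fun f x hx => ⟨hx.1.1, hx.2⟩
    exact ⟨x, closure_mono (hsub f₁) hx₁, closure_mono (hsub f₂) hx₂⟩
  · rintro ⟨y, hy₁, hy₂⟩
    have hplane : ∀ f, IsClosed {x : EuclideanSpace ℝ (Fin 3) | ⟪n f, x⟫ = c f} :=
      fun f => isClosed_eq (by fun_prop) (by fun_prop)
    obtain ⟨hy, hy₁⟩ := closure_setOf_norm_lt_one_and_subset (hplane f₁) hy₁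
    obtain ⟨-, hy₂⟩ := closure_setOf_norm_lt_one_and_subset (hplane f₂) hy₂
    exact closure_face_inter_nonempty hn hc hface_ne hnonobtuse hy hy₁ hy₂

/-- We work in the Klein (projective) model of `H³`: the open unit ball in `ℝ³`,
in which geodesic planes are intersections of the ball with Euclidean planes
`{x | ⟪n, x⟫ = c}` (`‖n‖ = 1`, `|c| < 1`), and closures in the compactification
`H³ ∪ ∂H³` correspond to Euclidean closures in the closed unit ball.
A polyhedron is the intersection of the half-spaces `⟪n f, x⟫ ≤ c f` with the
open ball.  The dihedral angle between the intersecting faces `f`, `g` is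
non-obtuse (lies in `(0, π/2]`) precisely when the Minkowski inner product of the
outward normals is `≤ 0`, i.e. `⟪n f, n g⟫ ≤ c f · c g`.

Statement: for a non-obtuse hyperbolic polyhedron, the closures of two faces
intersect iff the closures of their defining planes intersect. -/
theorem stmt14 {ι : Type*} [Fintype ι]
    (n : ι → EuclideanSpace ℝ (Fin 3)) (c : ι → ℝ)
    (hn : ∀ f, ‖n f‖ = 1) (hc : ∀ f, |c f| < 1)
    (P : Set (EuclideanSpace ℝ (Fin 3)))
    (hP : P = {x | ‖x‖ < 1 ∧ ∀ f, (inner ℝ (n f) x : ℝ) ≤ c f})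
    (hPint : (interior P).Nonempty)
    (Face : ι → Set (EuclideanSpace ℝ (Fin 3)))
    (hFace : ∀ f, Face f = {x ∈ P | (inner ℝ (n f) x : ℝ) = c f})
    (hface_ne : ∀ f, (Face f).Nonempty)
    (Plane : ι → Set (EuclideanSpace ℝ (Fin 3)))
    (hPlane : ∀ f, Plane f = {x | ‖x‖ < 1 ∧ (inner ℝ (n f) x : ℝ) = c f})
    (hnonobtuse : ∀ f g, f ≠ g → (Face f ∩ Face g).Nonempty →
      (inner ℝ (n f) (n g) : ℝ) ≤ c f * c g)
    (f₁ f₂ : ι) (hf : f₁ ≠ f₂) :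
    (closure (Face f₁) ∩ closure (Face f₂)).Nonempty ↔
      (closure (Plane f₁) ∩ closure (Plane f₂)).Nonempty :=
  stmt14_general n c hn hc P hP Face hFace hface_ne Plane hPlane hnonobtuse f₁ f₂
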